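/- arXiv:q-alg/9503005 — 5 statements merged into one kernel-verified Lean document; each statement's English description precedes it below -/
import Mathlib

section
/- Products of the matrices G_α close on their own span, with structure constants given by the trace formula: for all α, β ∈ ι, G_α · G_β = Σ_γ m_{αβ}^γ · G_γ, where m_{αβ}^γ := tr(G_α G_β G^γ). -/
open Matrix BigOperators Kronecker

/-- Matrix on `V × V × V` acting as `T` on the first and second factors. -/
def lift12 {k V : Type*} [Semiring k] [DecidableEq V]
    (T : Matrix (V × V) (V × V) k) : Matrix (V × V × V) (V × V × V) k :=
  Matrix.of fun p q =>
    T (p.1, p.2.1) (q.1, q.2.1) * (if p.2.2 = q.2.2 then 1 else 0)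

/-- Matrix on `V × V × V` acting as `T` on the first and third factors. -/
def lift13 {k V : Type*} [Semiring k] [DecidableEq V]
    (T : Matrix (V × V) (V × V) k) : Matrix (V × V × V) (V × V × V) k :=
  Matrix.of fun p q =>
    T (p.1, p.2.2) (q.1, q.2.2) * (if p.2.1 = q.2.1 then 1 else 0)

/-- Matrix on `V × V × V` acting as `T` on the second and third factors. -/
def lift23 {k V : Type*} [Semiring k] [DecidableEq V]
    (T : Matrix (V × V) (V × V) k) : Matrix (V × V × V) (V × V × V) k :=
  Matrix.of fun p q =>
    T (p.2.1, p.2.2) (q.2.1, q.2.2) * (if p.1 = q.1 then 1 else 0)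

lemma pentagon_reorder_aux {M A B : Type*} [AddCommMonoid M] [Fintype A] [Fintype B]
    (f : A → A → A → B → M) :
    (∑ γ : A, ∑ α : A, ∑ β : A, ∑ t : B, f γ α β t)
      = ∑ t : B, ∑ γ : A, ∑ β : A, ∑ α : A, f γ α β t := by
  calc (∑ γ : A, ∑ α : A, ∑ β : A, ∑ t : B, f γ α β t)
      = ∑ γ : A, ∑ t : B, ∑ α : A, ∑ β : A, f γ α β t :=
        Finset.sum_congr rfl fun γ _ =>
          (Finset.sum_congr rfl fun α _ => Finset.sum_comm).trans Finset.sum_comm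
    _ = ∑ t : B, ∑ γ : A, ∑ α : A, ∑ β : A, f γ α β t := Finset.sum_comm
    _ = ∑ t : B, ∑ γ : A, ∑ β : A, ∑ α : A, f γ α β t :=
        Finset.sum_congr rfl fun t _ => Finset.sum_congr rfl fun γ _ => Finset.sum_comm

section Aux
variable {k V ι : Type*} [Field k] [Fintype V] [DecidableEq V] [Fintype ι] [DecidableEq ι]

lemma pentagon_A1 (S : Matrix (V × V) (V × V) k) (a b c d e f : V) :
    (lift12 S * lift13 S * lift23 S) (a,b,c) (d,e,f)
      = ∑ x, ∑ y, ∑ t, S (a,b) (t,x) * S (t,c) (d,y) * S (x,y) (e,f) := by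
  simp only [Matrix.mul_apply, lift12, lift13, lift23, Matrix.of_apply,
    Fintype.sum_prod_type, mul_ite, ite_mul, mul_zero, zero_mul, mul_one, one_mul,
    Finset.sum_ite_eq, Finset.sum_ite_eq', Finset.mem_univ, if_true,
    Finset.sum_mul, Finset.mul_sum]
  simp only [Finset.sum_ite_irrel, Finset.sum_const_zero, Finset.sum_ite_eq,
    Finset.sum_ite_eq', Finset.mem_univ, if_true]

lemma pentagon_A2 (S : Matrix (V × V) (V × V) k) (a b c d e f : V) :
    (lift23 S * lift12 S) (a,b,c) (d,e,f)
      = ∑ x, S (b,c) (x,f) * S (a,x) (d,e) := by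
  simp only [Matrix.mul_apply, lift12, lift23, Matrix.of_apply,
    Fintype.sum_prod_type, mul_ite, ite_mul, mul_zero, zero_mul, mul_one, one_mul,
    Finset.sum_ite_eq, Finset.sum_ite_eq', Finset.mem_univ, if_true]
  simp only [Finset.sum_ite_irrel, Finset.sum_const_zero, Finset.sum_ite_eq,
    Finset.sum_ite_eq', Finset.mem_univ, if_true]

lemma pentagon_A3 (S : Matrix (V × V) (V × V) k) (G F : ι → Matrix V V k)
    (hdecomp : ∀ a b c d, S (a, b) (c, d) = ∑ α, G α a c * F α b d)
    (a d b c e f : V) :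
    ((∑ α, ∑ β, ((G α * G β) a d) • (F α ⊗ₖ F β)) * S) (b,c) (e,f)
      = ∑ x, ∑ y, ∑ t, S (a,b) (t,x) * S (t,c) (d,y) * S (x,y) (e,f) := by
  simp only [Matrix.mul_apply, Matrix.sum_apply, Matrix.smul_apply,
    Matrix.kroneckerMap_apply, Fintype.sum_prod_type, smul_eq_mul, hdecomp,
    Finset.sum_mul, Finset.mul_sum]
  refine Finset.sum_congr rfl fun x _ => Finset.sum_congr rfl fun y _ =>
    (pentagon_reorder_aux _).trans ?_
  refine Finset.sum_congr rfl fun t _ => Finset.sum_congr rfl fun γ _ =>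
    Finset.sum_congr rfl fun β _ => Finset.sum_congr rfl fun α _ => by ring

lemma pentagon_A4 (S : Matrix (V × V) (V × V) k) (G F : ι → Matrix V V k)
    (hdecomp : ∀ a b c d, S (a, b) (c, d) = ∑ α, G α a c * F α b d)
    (a d b c e f : V) :
    (S * (∑ δ, ((G δ) a d) • (F δ ⊗ₖ (1 : Matrix V V k)))) (b,c) (e,f)
      = ∑ x, S (b,c) (x,f) * S (a,x) (d,e) := by
  simp only [Matrix.mul_apply, Matrix.sum_apply, Matrix.smul_apply,
    Matrix.kroneckerMap_apply, Fintype.sum_prod_type, smul_eq_mul, Matrix.one_apply,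
    mul_ite, ite_mul, mul_zero, zero_mul, mul_one, one_mul,
    Finset.sum_ite_irrel, Finset.sum_const_zero, Finset.sum_ite_eq, Finset.sum_ite_eq',
    Finset.mem_univ, if_true, hdecomp, Finset.sum_mul, Finset.mul_sum]

end Aux

theorem pentagon_G_closure
    {k V ι : Type*} [Field k] [Fintype V] [DecidableEq V] [Fintype ι] [DecidableEq ι]
    (S : Matrix (V × V) (V × V) k)
    (hSinv : IsUnit S)
    (hpent : lift12 S * lift13 S * lift23 S = lift23 S * lift12 S)
    (G F Gd Fd : ι → Matrix V V k)
    (hdecomp : ∀ a b c d, S (a, b) (c, d) = ∑ α, G α a c * F α b d)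
    (hFdual : ∀ α β, (Fd α * F β).trace = if α = β then (1 : k) else 0)
    (hGdual : ∀ α β, (G α * Gd β).trace = if α = β then (1 : k) else 0) :
    ∀ α β, G α * G β = ∑ γ, (G α * G β * Gd γ).trace • G γ := by
  intro μ ν
  have hdet : IsUnit S.det := (Matrix.isUnit_iff_isUnit_det S).mp hSinv
  have hSS : S * S⁻¹ = 1 := Matrix.mul_nonsing_inv S hdet
  -- coefficients
  set c : ι → k := fun δ =>
    ((Fd μ ⊗ₖ Fd ν) * (S * (F δ ⊗ₖ (1 : Matrix V V k)) * S⁻¹)).trace with hc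
  -- main closure with coefficients c
  have hmain : G μ * G ν = ∑ δ, c δ • G δ := by
    ext a d
    -- pentagon in 23-slot matrix form
    have hAS : (∑ α, ∑ β, ((G α * G β) a d) • (F α ⊗ₖ F β)) * S
        = S * (∑ δ, ((G δ) a d) • (F δ ⊗ₖ (1 : Matrix V V k))) := by
      ext ⟨b, cc⟩ ⟨e, f⟩
      rw [pentagon_A3 S G F hdecomp, pentagon_A4 S G F hdecomp,
        ← pentagon_A1 S a b cc d e f, ← pentagon_A2 S a b cc d e f, hpent]
    have hL : (∑ α, ∑ β, ((G α * G β) a d) • (F α ⊗ₖ F β))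
        = S * (∑ δ, ((G δ) a d) • (F δ ⊗ₖ (1 : Matrix V V k))) * S⁻¹ := by
      rw [← hAS, Matrix.mul_assoc, hSS, Matrix.mul_one]
    have htr := congrArg (fun M => ((Fd μ ⊗ₖ Fd ν) * M).trace) hL
    simp only at htr
    -- compute LHS trace
    have hlhs : ((Fd μ ⊗ₖ Fd ν) * (∑ α, ∑ β, ((G α * G β) a d) • (F α ⊗ₖ F β))).trace
        = (G μ * G ν) a d := by
      rw [Matrix.mul_sum, Matrix.trace_sum]
      simp only [Matrix.mul_sum, Matrix.trace_sum, Matrix.mul_smul, Matrix.trace_smul,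
        ← Matrix.mul_kronecker_mul, Matrix.trace_kronecker, hFdual, smul_eq_mul,
        mul_ite, ite_mul, mul_zero, zero_mul, mul_one, one_mul,
        Finset.sum_ite_irrel, Finset.sum_const_zero, Finset.sum_ite_eq,
        Finset.sum_ite_eq', Finset.mem_univ, if_true]
    -- compute RHS trace
    have hrhs : ((Fd μ ⊗ₖ Fd ν) * (S * (∑ δ, ((G δ) a d) • (F δ ⊗ₖ (1 : Matrix V V k))) * S⁻¹)).trace
        = ∑ δ, (G δ) a d * c δ := by
      rw [Matrix.mul_sum, Finset.sum_mul, Matrix.mul_sum, Matrix.trace_sum]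
      refine Finset.sum_congr rfl fun δ _ => ?_
      rw [Matrix.mul_smul, Matrix.smul_mul, Matrix.mul_smul, Matrix.trace_smul, smul_eq_mul, hc]
    rw [hlhs, hrhs] at htr
    rw [htr]
    simp only [Matrix.sum_apply, Matrix.smul_apply, smul_eq_mul]
    exact Finset.sum_congr rfl fun δ _ => mul_comm _ _
  -- identify coefficients via trace duality
  have hcoeff : ∀ γ, (G μ * G ν * Gd γ).trace = c γ := by
    intro γ
    rw [hmain, Finset.sum_mul, Matrix.trace_sum]
    simp only [Matrix.smul_mul, Matrix.trace_smul, smul_eq_mul, hGdual,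
      mul_ite, mul_one, mul_zero, Finset.sum_ite_eq', Finset.mem_univ, if_true]
  have hfin : (∑ γ, (G μ * G ν * Gd γ).trace • G γ) = ∑ γ, c γ • G γ :=
    Finset.sum_congr rfl fun γ _ => by rw [hcoeff γ]
  rw [hfin]
  exact hmain
end

section
/- Products of the matrices F^α close on their own span, with structure constants given by the trace formula: for all α, β ∈ ι, F^α · F^β = Σ_γ μ^{αβ}_γ · F^γ, where μ^{αβ}_γ := tr(F^α F^β F_γ). -/
open Matrix BigOperators Kronecker

section PentagonAux

/-- Pull the innermost of a triple sum to the outside. -/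
lemma sum_swap_out {A B C M : Type*} [AddCommMonoid M] (s : Finset A) (t : Finset B)
    (u : Finset C) (f : A → B → C → M) :
    ∑ a ∈ s, ∑ b ∈ t, ∑ c ∈ u, f a b c = ∑ c ∈ u, ∑ a ∈ s, ∑ b ∈ t, f a b c :=
  (Finset.sum_congr rfl fun a _ => Finset.sum_comm).trans Finset.sum_comm

variable {k V : Type*} [CommRing k] [Fintype V] [DecidableEq V]

/-- Kronecker product of a `V × V`-matrix with a `V`-matrix, on `V × V × V`. -/
def mixM (A : Matrix (V × V) (V × V) k) (N : Matrix V V k) :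
    Matrix (V × V × V) (V × V × V) k :=
  Matrix.of fun p q => A (p.1, p.2.1) (q.1, q.2.1) * N p.2.2 q.2.2

lemma mixM_eq (A : Matrix (V × V) (V × V) k) (N : Matrix V V k) :
    mixM A N = Matrix.reindexAlgEquiv k k (Equiv.prodAssoc V V V) (A ⊗ₖ N) := by
  ext p q
  rfl

lemma mixM_mul (A B : Matrix (V × V) (V × V) k) (M N : Matrix V V k) :
    mixM A M * mixM B N = mixM (A * B) (M * N) := by
  rw [mixM_eq, mixM_eq, mixM_eq, ← _root_.map_mul, ← Matrix.mul_kronecker_mul]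

lemma mixM_one : mixM (1 : Matrix (V × V) (V × V) k) (1 : Matrix V V k) = 1 := by
  rw [mixM_eq, Matrix.one_kronecker_one, _root_.map_one]

lemma lift12_eq_mixM (A : Matrix (V × V) (V × V) k) : lift12 A = mixM A 1 := by
  ext p q
  simp [lift12, mixM, Matrix.one_apply]

/-- Contraction of the first two slots against `P`. -/
def pctr (P : Matrix (V × V) (V × V) k) (M : Matrix (V × V × V) (V × V × V) k) :
    Matrix V V k :=
  Matrix.of fun c c' => ∑ p : V × V, ∑ q : V × V, P q p * M (p.1, p.2, c) (q.1, q.2, c')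

lemma pctr_mixM (P A : Matrix (V × V) (V × V) k) (N : Matrix V V k) :
    pctr P (mixM A N) = (A * P).trace • N := by
  ext c c'
  simp only [pctr, mixM, Matrix.of_apply, Matrix.smul_apply, Matrix.trace, Matrix.diag,
    Matrix.mul_apply, smul_eq_mul, Finset.sum_mul, Prod.mk.eta]
  refine Finset.sum_congr rfl fun x _ => Finset.sum_congr rfl fun y _ => by ring

lemma pctr_sum {ι : Type*} (s : Finset ι) (P : Matrix (V × V) (V × V) k)
    (f : ι → Matrix (V × V × V) (V × V × V) k) :
    pctr P (∑ γ ∈ s, f γ) = ∑ γ ∈ s, pctr P (f γ) := by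
  ext c c'
  simp only [pctr, Matrix.of_apply, Matrix.sum_apply, Finset.mul_sum]
  exact sum_swap_out _ _ _ _

lemma lift13_decomp {ι : Type*} [Fintype ι] (S : Matrix (V × V) (V × V) k)
    (G F : ι → Matrix V V k)
    (hdecomp : ∀ a b c d, S (a, b) (c, d) = ∑ α, G α a c * F α b d) :
    lift13 S = ∑ μ, mixM (G μ ⊗ₖ (1 : Matrix V V k)) (F μ) := by
  ext p q
  simp only [lift13, mixM, Matrix.kroneckerMap_apply, Matrix.of_apply, Matrix.sum_apply,
    hdecomp, Finset.sum_mul, Matrix.one_apply]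
  exact Finset.sum_congr rfl fun μ _ => by ring

lemma lift23_decomp {ι : Type*} [Fintype ι] (S : Matrix (V × V) (V × V) k)
    (G F : ι → Matrix V V k)
    (hdecomp : ∀ a b c d, S (a, b) (c, d) = ∑ α, G α a c * F α b d) :
    lift23 S = ∑ ν, mixM ((1 : Matrix V V k) ⊗ₖ G ν) (F ν) := by
  ext p q
  simp only [lift23, mixM, Matrix.kroneckerMap_apply, Matrix.of_apply, Matrix.sum_apply,
    hdecomp, Finset.sum_mul, Matrix.one_apply]
  exact Finset.sum_congr rfl fun ν _ => by ring

end PentagonAux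

theorem pentagon_F_closure
    {k V ι : Type*} [Field k] [Fintype V] [DecidableEq V] [Fintype ι] [DecidableEq ι]
    (S : Matrix (V × V) (V × V) k)
    (hSinv : IsUnit S)
    (hpent : lift12 S * lift13 S * lift23 S = lift23 S * lift12 S)
    (G F Gd Fd : ι → Matrix V V k)
    (hdecomp : ∀ a b c d, S (a, b) (c, d) = ∑ α, G α a c * F α b d)
    (hFdual : ∀ α β, (Fd α * F β).trace = if α = β then (1 : k) else 0)
    (hGdual : ∀ α β, (G α * Gd β).trace = if α = β then (1 : k) else 0) :
    ∀ α β, F α * F β = ∑ γ, (F α * F β * Fd γ).trace • F γ := by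
  intro α β
  obtain ⟨iS⟩ := hSinv.nonempty_invertible
  set P := Gd α ⊗ₖ Gd β with hP
  set c : ι → k := fun γ => (⅟S * (((1 : Matrix V V k) ⊗ₖ G γ) * S) * P).trace with hc
  -- key identity from the pentagon
  have hkey : lift13 S * lift23 S
      = ∑ γ, mixM (⅟S * (((1 : Matrix V V k) ⊗ₖ G γ) * S)) (F γ) := by
    have h1 : lift12 (⅟S) * (lift12 S * (lift13 S * lift23 S)) = lift13 S * lift23 S := by
      rw [← mul_assoc, lift12_eq_mixM, lift12_eq_mixM, mixM_mul, invOf_mul_self,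
        one_mul, mixM_one, one_mul]
    calc lift13 S * lift23 S
        = lift12 (⅟S) * (lift12 S * (lift13 S * lift23 S)) := h1.symm
      _ = lift12 (⅟S) * (lift12 S * lift13 S * lift23 S) := by rw [mul_assoc]
      _ = lift12 (⅟S) * (lift23 S * lift12 S) := by rw [hpent]
      _ = ∑ γ, mixM (⅟S * (((1 : Matrix V V k) ⊗ₖ G γ) * S)) (F γ) := by
          rw [lift23_decomp S G F hdecomp, Finset.sum_mul, Finset.mul_sum]
          refine Finset.sum_congr rfl fun γ _ => ?_
          rw [lift12_eq_mixM, lift12_eq_mixM, ← mul_assoc, mixM_mul, mixM_mul,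
            mul_one, one_mul, mul_assoc]
  -- contract both sides against P
  have hLHS : pctr P (lift13 S * lift23 S) = F α * F β := by
    rw [lift13_decomp S G F hdecomp, lift23_decomp S G F hdecomp, Finset.sum_mul]
    have h2 : ∀ μ : ι,
        mixM (G μ ⊗ₖ (1 : Matrix V V k)) (F μ)
            * (∑ ν, mixM ((1 : Matrix V V k) ⊗ₖ G ν) (F ν))
        = ∑ ν, mixM (G μ ⊗ₖ G ν) (F μ * F ν) := by
      intro μ
      rw [Finset.mul_sum]
      refine Finset.sum_congr rfl fun ν _ => ?_
      rw [mixM_mul, ← Matrix.mul_kronecker_mul, mul_one, one_mul]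
    simp only [h2]
    rw [pctr_sum]
    simp only [pctr_sum, pctr_mixM, hP, ← Matrix.mul_kronecker_mul,
      Matrix.trace_kronecker, hGdual]
    simp [Finset.sum_ite_eq', ite_mul, zero_mul, one_mul, ite_smul, zero_smul, one_smul]
  have hmain : F α * F β = ∑ γ, c γ • F γ := by
    rw [← hLHS, hkey, pctr_sum]
    simp only [pctr_mixM, hc]
  have hcoef : ∀ γ, (F α * F β * Fd γ).trace = c γ := by
    intro γ
    rw [hmain, Finset.sum_mul, Matrix.trace_sum]
    have h3 : ∀ δ : ι, (F δ * Fd γ).trace = if γ = δ then 1 else 0 := by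
      intro δ
      rw [Matrix.trace_mul_comm]
      exact hFdual γ δ
    simp only [Matrix.smul_mul, Matrix.trace_smul, smul_eq_mul, h3]
    simp
  calc F α * F β = ∑ γ, c γ • F γ := hmain
    _ = ∑ γ, (F α * F β * Fd γ).trace • F γ :=
        Finset.sum_congr rfl fun γ _ => by rw [hcoef]
end

section
/- The structure constants extracted from an invertible pentagon solution are associative and coassociative: for all α, β, γ, δ ∈ ι, Σ_σ m_{αβ}^σ m_{σγ}^δ = Σ_σ m_{βγ}^σ m_{ασ}^δ and Σ_σ μ^{αβ}_σ μ^{σγ}_δ = Σ_σ μ^{βγ}_σ μ^{ασ}_δ, where m_{αβ}^γ := tr(G_α G_β G^γ) and μ^{αβ}_γ := tr(F^α F^β F_γ). -/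
open Matrix BigOperators Kronecker

set_option linter.unusedSectionVars false
set_option maxHeartbeats 2000000

section Aux
variable {k V : Type*} [CommRing k] [Fintype V] [DecidableEq V]

/-- 3-fold elementary tensor. -/
def E3 (A B C : Matrix V V k) : Matrix (V × V × V) (V × V × V) k :=
  A ⊗ₖ (B ⊗ₖ C)

lemma E3_mul (A B C A' B' C' : Matrix V V k) :
    E3 A B C * E3 A' B' C' = E3 (A * A') (B * B') (C * C') := by
  simp [E3, Matrix.mul_kronecker_mul]

lemma trace_E3 (A B C : Matrix V V k) :
    (E3 A B C).trace = A.trace * (B.trace * C.trace) := by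
  simp [E3, Matrix.trace_kronecker]

/-- reassociation equiv for `lift12`. -/
def e12 {V : Type*} : V × V × V ≃ (V × V) × V :=
  ⟨fun p => ((p.1, p.2.1), p.2.2), fun p => (p.1.1, p.1.2, p.2), fun _ => rfl, fun _ => rfl⟩

/-- equiv for `lift13`. -/
def e13 {V : Type*} : V × V × V ≃ (V × V) × V :=
  ⟨fun p => ((p.1, p.2.2), p.2.1), fun p => (p.1.1, p.2, p.1.2), fun _ => rfl, fun _ => rfl⟩

/-- equiv for `lift23`. -/
def e23 {V : Type*} : V × V × V ≃ (V × V) × V :=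
  ⟨fun p => ((p.2.1, p.2.2), p.1), fun p => (p.2, p.1.1, p.1.2), fun _ => rfl, fun _ => rfl⟩

lemma lift12_eq (T : Matrix (V × V) (V × V) k) :
    lift12 T = (T ⊗ₖ (1 : Matrix V V k)).submatrix e12 e12 := by
  ext ⟨a, b, c⟩ ⟨d, e, f⟩
  simp [lift12, e12, Matrix.one_apply]

lemma lift13_eq (T : Matrix (V × V) (V × V) k) :
    lift13 T = (T ⊗ₖ (1 : Matrix V V k)).submatrix e13 e13 := by
  ext ⟨a, b, c⟩ ⟨d, e, f⟩
  simp [lift13, e13, Matrix.one_apply]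

lemma lift23_eq (T : Matrix (V × V) (V × V) k) :
    lift23 T = (T ⊗ₖ (1 : Matrix V V k)).submatrix e23 e23 := by
  ext ⟨a, b, c⟩ ⟨d, e, f⟩
  simp [lift23, e23, Matrix.one_apply]

lemma lift12_mul (M N : Matrix (V × V) (V × V) k) :
    lift12 (M * N) = lift12 M * lift12 N := by
  simp only [lift12_eq]
  rw [Matrix.submatrix_mul_equiv, ← Matrix.mul_kronecker_mul, mul_one]

lemma lift13_mul (M N : Matrix (V × V) (V × V) k) :
    lift13 (M * N) = lift13 M * lift13 N := by
  simp only [lift13_eq]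
  rw [Matrix.submatrix_mul_equiv, ← Matrix.mul_kronecker_mul, mul_one]

lemma lift23_mul (M N : Matrix (V × V) (V × V) k) :
    lift23 (M * N) = lift23 M * lift23 N := by
  simp only [lift23_eq]
  rw [Matrix.submatrix_mul_equiv, ← Matrix.mul_kronecker_mul, mul_one]

lemma lift12_one : lift12 (1 : Matrix (V × V) (V × V) k) = 1 := by
  rw [lift12_eq, Matrix.one_kronecker_one, Matrix.submatrix_one_equiv]

lemma lift23_one : lift23 (1 : Matrix (V × V) (V × V) k) = 1 := by
  rw [lift23_eq, Matrix.one_kronecker_one, Matrix.submatrix_one_equiv]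

lemma lift12_E2 (A B : Matrix V V k) : lift12 (A ⊗ₖ B) = E3 A B 1 := by
  ext ⟨a, b, c⟩ ⟨d, e, f⟩
  simp [lift12, E3, Matrix.one_apply, mul_assoc]

lemma lift13_E2 (A B : Matrix V V k) : lift13 (A ⊗ₖ B) = E3 A 1 B := by
  ext ⟨a, b, c⟩ ⟨d, e, f⟩
  simp [lift13, E3, Matrix.one_apply]

lemma lift23_E2 (A B : Matrix V V k) : lift23 (A ⊗ₖ B) = E3 1 A B := by
  ext ⟨a, b, c⟩ ⟨d, e, f⟩
  simp [lift23, E3, Matrix.one_apply]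

lemma lift12_sum {α : Type*} (s : Finset α) (M : α → Matrix (V × V) (V × V) k) :
    lift12 (∑ i ∈ s, M i) = ∑ i ∈ s, lift12 (M i) := by
  ext ⟨a, b, c⟩ ⟨d, e, f⟩
  simp [lift12, Finset.sum_apply, Matrix.sum_apply, Finset.sum_mul]

lemma lift13_sum {α : Type*} (s : Finset α) (M : α → Matrix (V × V) (V × V) k) :
    lift13 (∑ i ∈ s, M i) = ∑ i ∈ s, lift13 (M i) := by
  ext ⟨a, b, c⟩ ⟨d, e, f⟩
  simp [lift13, Finset.sum_apply, Matrix.sum_apply, Finset.sum_mul]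

lemma lift23_sum {α : Type*} (s : Finset α) (M : α → Matrix (V × V) (V × V) k) :
    lift23 (∑ i ∈ s, M i) = ∑ i ∈ s, lift23 (M i) := by
  ext ⟨a, b, c⟩ ⟨d, e, f⟩
  simp [lift23, Finset.sum_apply, Matrix.sum_apply, Finset.sum_mul]

lemma lift12_smul (c : k) (M : Matrix (V × V) (V × V) k) :
    lift12 (c • M) = c • lift12 M := by
  ext ⟨a, b, x⟩ ⟨d, e, f⟩
  simp [lift12, mul_assoc]

lemma lift13_smul (c : k) (M : Matrix (V × V) (V × V) k) :
    lift13 (c • M) = c • lift13 M := by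
  ext ⟨a, b, x⟩ ⟨d, e, f⟩
  simp [lift13, mul_assoc]

lemma lift23_smul (c : k) (M : Matrix (V × V) (V × V) k) :
    lift23 (c • M) = c • lift23 M := by
  ext ⟨a, b, x⟩ ⟨d, e, f⟩
  simp [lift23, mul_assoc]

/-- `lift12` commutes with matrices acting on the third factor. -/
lemma lift12_comm (T : Matrix (V × V) (V × V) k) (C : Matrix V V k) :
    lift12 T * E3 1 1 C = E3 1 1 C * lift12 T := by
  ext ⟨a, b, c⟩ ⟨d, e, f⟩
  simp only [Matrix.mul_apply, lift12, E3, Matrix.of_apply, kroneckerMap_apply,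
    Fintype.sum_prod_type, Matrix.one_apply, mul_ite, mul_one, mul_zero, ite_mul, zero_mul,
    one_mul, Finset.sum_ite_eq, Finset.sum_ite_eq', Finset.mem_univ, if_true]
  simp [Finset.sum_ite_eq, Finset.sum_ite_eq']
  ring

/-- `lift23` commutes with matrices acting on the first factor. -/
lemma lift23_comm (T : Matrix (V × V) (V × V) k) (A : Matrix V V k) :
    lift23 T * E3 A 1 1 = E3 A 1 1 * lift23 T := by
  ext ⟨a, b, c⟩ ⟨d, e, f⟩
  simp only [Matrix.mul_apply, lift23, E3, Matrix.of_apply, kroneckerMap_apply,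
    Fintype.sum_prod_type, Matrix.one_apply, mul_ite, mul_one, mul_zero, ite_mul, zero_mul,
    one_mul, Finset.sum_ite_eq, Finset.sum_ite_eq', Finset.mem_univ, if_true]
  simp [Finset.sum_ite_eq, Finset.sum_ite_eq']
  ring

/-- partial trace on the third factor against `X`. -/
def P3 (X : Matrix V V k) (M : Matrix (V × V × V) (V × V × V) k) :
    Matrix (V × V) (V × V) k :=
  Matrix.of fun p q => ∑ e, ∑ f, X f e * M (p.1, p.2, e) (q.1, q.2, f)

/-- partial trace on the first factor against `X`. -/
def P1 (X : Matrix V V k) (M : Matrix (V × V × V) (V × V × V) k) :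
    Matrix (V × V) (V × V) k :=
  Matrix.of fun p q => ∑ a, ∑ c, X c a * M (a, p.1, p.2) (c, q.1, q.2)

lemma P3_sum {α : Type*} (X : Matrix V V k) (s : Finset α)
    (M : α → Matrix (V × V × V) (V × V × V) k) :
    P3 X (∑ i ∈ s, M i) = ∑ i ∈ s, P3 X (M i) := by
  ext ⟨a, b⟩ ⟨c, d⟩
  simp only [P3, Matrix.sum_apply, Finset.mul_sum, Matrix.of_apply]
  exact (Finset.sum_congr rfl fun e _ => Finset.sum_comm).trans Finset.sum_comm

lemma P1_sum {α : Type*} (X : Matrix V V k) (s : Finset α)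
    (M : α → Matrix (V × V × V) (V × V × V) k) :
    P1 X (∑ i ∈ s, M i) = ∑ i ∈ s, P1 X (M i) := by
  ext ⟨a, b⟩ ⟨c, d⟩
  simp only [P1, Matrix.sum_apply, Finset.mul_sum, Matrix.of_apply]
  exact (Finset.sum_congr rfl fun e _ => Finset.sum_comm).trans Finset.sum_comm

lemma P3_E3 (X A B C : Matrix V V k) :
    P3 X (E3 A B C) = (C * X).trace • (A ⊗ₖ B) := by
  ext ⟨a, b⟩ ⟨c, d⟩
  simp only [P3, E3, Matrix.of_apply, kroneckerMap_apply, Matrix.smul_apply,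
    Matrix.trace, Matrix.diag, Matrix.mul_apply, smul_eq_mul, Finset.sum_mul, Finset.mul_sum]
  apply Finset.sum_congr rfl; intros
  apply Finset.sum_congr rfl; intros
  ring

lemma P1_E3 (X A B C : Matrix V V k) :
    P1 X (E3 A B C) = (A * X).trace • (B ⊗ₖ C) := by
  ext ⟨a, b⟩ ⟨c, d⟩
  simp only [P1, E3, Matrix.of_apply, kroneckerMap_apply, Matrix.smul_apply,
    Matrix.trace, Matrix.diag, Matrix.mul_apply, smul_eq_mul, Finset.sum_mul, Finset.mul_sum]
  apply Finset.sum_congr rfl; intros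
  apply Finset.sum_congr rfl; intros
  ring

lemma sum_swap3 {M ι' : Type*} [AddCommMonoid M] [Fintype ι'] (f : ι' → ι' → ι' → M) :
    ∑ a, ∑ b, ∑ c, f a b c = ∑ c, ∑ b, ∑ a, f a b c := by
  refine (Finset.sum_congr rfl fun a _ => Finset.sum_comm).trans ?_
  exact Finset.sum_comm.trans (Finset.sum_congr rfl fun c _ => Finset.sum_comm)

end Aux

theorem pentagon_structure_constants_assoc_coassoc
    {k V ι : Type*} [Field k] [Fintype V] [DecidableEq V] [Fintype ι] [DecidableEq ι]
    (S : Matrix (V × V) (V × V) k)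
    (hSinv : IsUnit S)
    (hpent : lift12 S * lift13 S * lift23 S = lift23 S * lift12 S)
    (G F Gd Fd : ι → Matrix V V k)
    (hdecomp : ∀ a b c d, S (a, b) (c, d) = ∑ α, G α a c * F α b d)
    (hFdual : ∀ α β, (Fd α * F β).trace = if α = β then (1 : k) else 0)
    (hGdual : ∀ α β, (G α * Gd β).trace = if α = β then (1 : k) else 0) :
    ∀ α β γ δ, (∑ σ, (G α * G β * Gd σ).trace * (G σ * G γ * Gd δ).trace = ∑ σ, (G β * G γ * Gd σ).trace * (G α * G σ * Gd δ).trace) ∧ (∑ σ, (F α * F β * Fd σ).trace * (F σ * F γ * Fd δ).trace = ∑ σ, (F β * F γ * Fd σ).trace * (F α * F σ * Fd δ).trace) := by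
  intro α β γ δ
  -- invertibility of the lifted matrices
  obtain ⟨u, hu⟩ := hSinv
  have hSSi : S * (↑u⁻¹ : Matrix (V × V) (V × V) k) = 1 := by rw [← hu]; exact u.mul_inv
  have hSiS : (↑u⁻¹ : Matrix (V × V) (V × V) k) * S = 1 := by rw [← hu]; exact u.inv_mul
  have hU12 : IsUnit (lift12 S) :=
    ⟨⟨lift12 S, lift12 (↑u⁻¹ : Matrix (V × V) (V × V) k),
      by rw [← lift12_mul, hSSi, lift12_one], by rw [← lift12_mul, hSiS, lift12_one]⟩, rfl⟩
  have hU23 : IsUnit (lift23 S) :=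
    ⟨⟨lift23 S, lift23 (↑u⁻¹ : Matrix (V × V) (V × V) k),
      by rw [← lift23_mul, hSSi, lift23_one], by rw [← lift23_mul, hSiS, lift23_one]⟩, rfl⟩
  -- decomposition of S as a sum of elementary tensors
  have hS : S = ∑ c, (G c) ⊗ₖ (F c) := by
    ext ⟨a, b⟩ ⟨c, d⟩
    simp [hdecomp, Matrix.sum_apply]
  have h12 : lift12 S = ∑ a, E3 (G a) (F a) 1 := by
    rw [hS, lift12_sum]; simp only [lift12_E2]
  have h13 : lift13 S = ∑ a, E3 (G a) 1 (F a) := by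
    rw [hS, lift13_sum]; simp only [lift13_E2]
  have h23 : lift23 S = ∑ a, E3 1 (G a) (F a) := by
    rw [hS, lift23_sum]; simp only [lift23_E2]
  -- the pentagon equation in elementary-tensor form
  have pentE : (∑ c, ∑ b, ∑ a, E3 (G a * G b) (F a * G c) (F b * F c)
        : Matrix (V × V × V) (V × V × V) k)
      = ∑ a, ∑ c, E3 (G a) (G c * F a) (F c) := by
    have h := hpent
    rw [h12, h13, h23] at h
    simpa only [Finset.sum_mul, Finset.mul_sum, E3_mul, one_mul, mul_one] using h
  have hFd' : ∀ c σ, (F c * Fd σ).trace = if σ = c then (1 : k) else 0 := fun c σ => by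
    rw [Matrix.trace_mul_comm, hFdual]
  -- key identity for the comultiplication side
  have eq2 : ∀ σ, S * (∑ b, ∑ c, (F b * F c * Fd σ).trace • ((G b) ⊗ₖ (G c)))
      = ((1 : Matrix V V k) ⊗ₖ (G σ)) * S := by
    intro σ
    have h := congrArg (P3 (Fd σ)) pentE
    simp only [P3_sum, P3_E3] at h
    calc S * (∑ b, ∑ c, (F b * F c * Fd σ).trace • ((G b) ⊗ₖ (G c)))
        = ∑ b, ∑ c, ∑ a, (F b * F c * Fd σ).trace • ((G a * G b) ⊗ₖ (F a * G c)) := by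
          rw [hS]
          simp only [Finset.sum_mul, Finset.mul_sum, Matrix.mul_smul, Finset.smul_sum,
            ← Matrix.mul_kronecker_mul]
      _ = ∑ c, ∑ b, ∑ a, (F b * F c * Fd σ).trace • ((G a * G b) ⊗ₖ (F a * G c)) :=
          Finset.sum_comm
      _ = ∑ a, ∑ c, (F c * Fd σ).trace • ((G a) ⊗ₖ (G c * F a)) := h
      _ = ((1 : Matrix V V k) ⊗ₖ (G σ)) * S := by
          simp only [hFd', ite_smul, one_smul, zero_smul, Finset.sum_ite_eq,
            Finset.mem_univ, if_true]
          rw [hS]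
          simp only [Finset.mul_sum, ← Matrix.mul_kronecker_mul, one_mul]
  -- key identity for the multiplication side
  have eq1 : ∀ σ, (∑ a, ∑ b, (G a * G b * Gd σ).trace • ((F a) ⊗ₖ (F b))) * S
      = S * ((F σ) ⊗ₖ (1 : Matrix V V k)) := by
    intro σ
    have h := congrArg (P1 (Gd σ)) pentE
    simp only [P1_sum, P1_E3] at h
    calc (∑ a, ∑ b, (G a * G b * Gd σ).trace • ((F a) ⊗ₖ (F b))) * S
        = ∑ c, ∑ a, ∑ b, (G a * G b * Gd σ).trace • ((F a * G c) ⊗ₖ (F b * F c)) := by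
          rw [hS]
          simp only [Finset.sum_mul, Finset.mul_sum, Matrix.smul_mul, Finset.smul_sum,
            ← Matrix.mul_kronecker_mul]
      _ = ∑ c, ∑ b, ∑ a, (G a * G b * Gd σ).trace • ((F a * G c) ⊗ₖ (F b * F c)) :=
          Finset.sum_congr rfl fun c _ => Finset.sum_comm
      _ = ∑ a, ∑ c, (G a * Gd σ).trace • ((G c * F a) ⊗ₖ (F c)) := h
      _ = S * ((F σ) ⊗ₖ (1 : Matrix V V k)) := by
          rw [Finset.sum_comm]
          simp only [hGdual, ite_smul, one_smul, zero_smul, Finset.sum_ite_eq',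
            Finset.mem_univ, if_true]
          rw [hS]
          simp only [Finset.sum_mul, ← Matrix.mul_kronecker_mul, mul_one]
  -- lifted versions of eq2
  have l12eq2 : ∀ σ, lift12 S * (∑ b, ∑ c, (F b * F c * Fd σ).trace • E3 (G b) (G c) 1)
      = E3 1 (G σ) 1 * lift12 S := fun σ => by
    have h := congrArg lift12 (eq2 σ)
    rw [lift12_mul, lift12_mul] at h
    simpa only [lift12_sum, lift12_smul, lift12_E2] using h
  have l13eq2 : ∀ σ, lift13 S * (∑ b, ∑ c, (F b * F c * Fd σ).trace • E3 (G b) 1 (G c))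
      = E3 1 1 (G σ) * lift13 S := fun σ => by
    have h := congrArg lift13 (eq2 σ)
    rw [lift13_mul, lift13_mul] at h
    simpa only [lift13_sum, lift13_smul, lift13_E2] using h
  have l23eq2 : ∀ σ, lift23 S * (∑ b, ∑ c, (F b * F c * Fd σ).trace • E3 1 (G b) (G c))
      = E3 1 1 (G σ) * lift23 S := fun σ => by
    have h := congrArg lift23 (eq2 σ)
    rw [lift23_mul, lift23_mul] at h
    simpa only [lift23_sum, lift23_smul, lift23_E2] using h
  -- lifted versions of eq1
  have l12eq1 : ∀ σ, (∑ a, ∑ b, (G a * G b * Gd σ).trace • E3 (F a) (F b) 1) * lift12 S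
      = lift12 S * E3 (F σ) 1 1 := fun σ => by
    have h := congrArg lift12 (eq1 σ)
    rw [lift12_mul, lift12_mul] at h
    simpa only [lift12_sum, lift12_smul, lift12_E2] using h
  have l13eq1 : ∀ σ, (∑ a, ∑ b, (G a * G b * Gd σ).trace • E3 (F a) 1 (F b)) * lift13 S
      = lift13 S * E3 (F σ) 1 1 := fun σ => by
    have h := congrArg lift13 (eq1 σ)
    rw [lift13_mul, lift13_mul] at h
    simpa only [lift13_sum, lift13_smul, lift13_E2] using h
  have l23eq1 : ∀ σ, (∑ a, ∑ b, (G a * G b * Gd σ).trace • E3 1 (F a) (F b)) * lift23 S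
      = lift23 S * E3 1 (F σ) 1 := fun σ => by
    have h := congrArg lift23 (eq1 σ)
    rw [lift23_mul, lift23_mul] at h
    simpa only [lift23_sum, lift23_smul, lift23_E2] using h
  constructor
  · -- associativity of m
    obtain ⟨W1, hW1⟩ : ∃ W : ι → Matrix (V × V × V) (V × V × V) k,
        ∀ σ, W σ = ∑ a, ∑ b, (G a * G b * Gd σ).trace • E3 (F a) (F b) 1 := ⟨_, fun _ => rfl⟩
    obtain ⟨W2, hW2⟩ : ∃ W : ι → Matrix (V × V × V) (V × V × V) k,
        ∀ σ, W σ = ∑ a, ∑ b, (G a * G b * Gd σ).trace • E3 1 (F a) (F b) := ⟨_, fun _ => rfl⟩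
    set A : Matrix (V × V × V) (V × V × V) k :=
      ∑ σ, ∑ c, (G σ * G c * Gd δ).trace • (W1 σ * E3 1 1 (F c)) with hAdef
    set B : Matrix (V × V × V) (V × V × V) k :=
      ∑ a, ∑ σ, (G a * G σ * Gd δ).trace • (E3 (F a) 1 1 * W2 σ) with hBdef
    have termA : ∀ σ c, W1 σ * E3 1 1 (F c) * lift12 S = lift12 S * E3 (F σ) 1 (F c) := by
      intro σ c
      rw [hW1, mul_assoc, ← lift12_comm, ← mul_assoc, l12eq1 σ, mul_assoc, E3_mul, mul_one,
        one_mul, one_mul]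
    have stepA : A * lift12 S
        = lift12 S * (∑ σ, ∑ c, (G σ * G c * Gd δ).trace • E3 (F σ) 1 (F c)) := by
      rw [hAdef]
      simp only [Finset.sum_mul, Matrix.smul_mul, termA, Finset.mul_sum, Matrix.mul_smul]
    have chainA : A * lift12 S * lift13 S = lift12 S * lift13 S * E3 (F δ) 1 1 := by
      rw [stepA, mul_assoc, l13eq1 δ, ← mul_assoc]
    have termB : ∀ a σ, E3 (F a) 1 1 * W2 σ * lift23 S = lift23 S * E3 (F a) (F σ) 1 := by
      intro a σ
      rw [hW2, mul_assoc, l23eq1 σ, ← mul_assoc, ← lift23_comm, mul_assoc, E3_mul, mul_one,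
        one_mul, one_mul]
    have stepB : B * lift23 S
        = lift23 S * (∑ a, ∑ σ, (G a * G σ * Gd δ).trace • E3 (F a) (F σ) 1) := by
      rw [hBdef]
      simp only [Finset.sum_mul, Matrix.smul_mul, termB, Finset.mul_sum, Matrix.mul_smul]
    have chainB : B * lift23 S * lift12 S = lift23 S * lift12 S * E3 (F δ) 1 1 := by
      rw [stepB, mul_assoc, l12eq1 δ, ← mul_assoc]
    have hABmul : A * lift23 S * lift12 S = B * lift23 S * lift12 S := by
      calc A * lift23 S * lift12 S = A * (lift23 S * lift12 S) := by rw [mul_assoc]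
        _ = A * (lift12 S * lift13 S * lift23 S) := by rw [hpent]
        _ = A * lift12 S * lift13 S * lift23 S := by
            rw [← mul_assoc, ← mul_assoc]
        _ = lift12 S * lift13 S * E3 (F δ) 1 1 * lift23 S := by rw [chainA]
        _ = lift12 S * lift13 S * (E3 (F δ) 1 1 * lift23 S) := by rw [mul_assoc]
        _ = lift12 S * lift13 S * (lift23 S * E3 (F δ) 1 1) := by rw [← lift23_comm]
        _ = lift12 S * lift13 S * lift23 S * E3 (F δ) 1 1 := by rw [← mul_assoc]
        _ = lift23 S * lift12 S * E3 (F δ) 1 1 := by rw [hpent]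
        _ = B * lift23 S * lift12 S := by rw [chainB]
    have hAB : A = B :=
      hU23.mul_right_cancel (hU12.mul_right_cancel hABmul)
    have hWE : ∀ σ c, W1 σ * E3 1 1 (F c)
        = ∑ a, ∑ b, (G a * G b * Gd σ).trace • E3 (F a) (F b) (F c) := by
      intro σ c
      rw [hW1]
      simp only [Finset.sum_mul, Matrix.smul_mul, E3_mul, mul_one, one_mul]
    have hWE' : ∀ a σ, E3 (F a) 1 1 * W2 σ
        = ∑ b, ∑ c, (G b * G c * Gd σ).trace • E3 (F a) (F b) (F c) := by
      intro a σ
      rw [hW2]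
      simp only [Finset.mul_sum, Matrix.mul_smul, E3_mul, mul_one, one_mul]
    have traceterm : ∀ a b c,
        (E3 (Fd α) (Fd β) (Fd γ) * E3 (F a) (F b) (F c)).trace
        = (if α = a then (1 : k) else 0) * ((if β = b then (1 : k) else 0) *
            (if γ = c then (1 : k) else 0)) := by
      intro a b c
      rw [E3_mul, trace_E3, hFdual, hFdual, hFdual]
    have pairA : (E3 (Fd α) (Fd β) (Fd γ) * A).trace
        = ∑ σ, (G α * G β * Gd σ).trace * (G σ * G γ * Gd δ).trace := by
      rw [hAdef]
      simp only [hWE]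
      calc (E3 (Fd α) (Fd β) (Fd γ) * (∑ σ, ∑ c, (G σ * G c * Gd δ).trace •
              (∑ a, ∑ b, (G a * G b * Gd σ).trace • E3 (F a) (F b) (F c)))).trace
          = ∑ σ, ∑ c, ∑ a, ∑ b, (if β = b then (1:k) else 0) *
              ((if α = a then (1:k) else 0) * ((if γ = c then (1:k) else 0) *
                ((G a * G b * Gd σ).trace * (G σ * G c * Gd δ).trace))) := by
            simp only [Finset.mul_sum, Matrix.mul_smul, Matrix.trace_sum, Matrix.trace_smul,
              smul_eq_mul, traceterm]
            refine Finset.sum_congr rfl fun σ _ => Finset.sum_congr rfl fun c _ =>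
              Finset.sum_congr rfl fun a _ => Finset.sum_congr rfl fun b _ => by ring
        _ = ∑ σ, (G α * G β * Gd σ).trace * (G σ * G γ * Gd δ).trace := by
            simp only [ite_mul, one_mul, zero_mul, Finset.sum_ite_eq, Finset.mem_univ,
              if_true]
    have pairB : (E3 (Fd α) (Fd β) (Fd γ) * B).trace
        = ∑ σ, (G β * G γ * Gd σ).trace * (G α * G σ * Gd δ).trace := by
      rw [hBdef]
      simp only [hWE']
      calc (E3 (Fd α) (Fd β) (Fd γ) * (∑ a, ∑ σ, (G a * G σ * Gd δ).trace •
              (∑ b, ∑ c, (G b * G c * Gd σ).trace • E3 (F a) (F b) (F c)))).trace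
          = ∑ a, ∑ σ, ∑ b, ∑ c, (if γ = c then (1:k) else 0) *
              ((if β = b then (1:k) else 0) * ((if α = a then (1:k) else 0) *
                ((G b * G c * Gd σ).trace * (G a * G σ * Gd δ).trace))) := by
            simp only [Finset.mul_sum, Matrix.mul_smul, Matrix.trace_sum, Matrix.trace_smul,
              smul_eq_mul, traceterm]
            refine Finset.sum_congr rfl fun a _ => Finset.sum_congr rfl fun σ _ =>
              Finset.sum_congr rfl fun b _ => Finset.sum_congr rfl fun c _ => by ring
        _ = ∑ σ, ∑ a, ∑ b, ∑ c, (if γ = c then (1:k) else 0) *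
              ((if β = b then (1:k) else 0) * ((if α = a then (1:k) else 0) *
                ((G b * G c * Gd σ).trace * (G a * G σ * Gd δ).trace))) :=
            Finset.sum_comm
        _ = ∑ σ, (G β * G γ * Gd σ).trace * (G α * G σ * Gd δ).trace := by
            simp only [ite_mul, one_mul, zero_mul, Finset.sum_ite_eq, Finset.mem_univ,
              if_true]
    rw [← pairA, ← pairB, hAB]
  · -- coassociativity (μ side)
    obtain ⟨W1, hW1⟩ : ∃ W : ι → Matrix (V × V × V) (V × V × V) k,
        ∀ σ, W σ = ∑ a, ∑ b, (F a * F b * Fd σ).trace • E3 (G a) (G b) 1 := ⟨_, fun _ => rfl⟩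
    obtain ⟨W2, hW2⟩ : ∃ W : ι → Matrix (V × V × V) (V × V × V) k,
        ∀ σ, W σ = ∑ a, ∑ b, (F a * F b * Fd σ).trace • E3 1 (G a) (G b) := ⟨_, fun _ => rfl⟩
    set A : Matrix (V × V × V) (V × V × V) k :=
      ∑ σ, ∑ c, (F σ * F c * Fd δ).trace • (W1 σ * E3 1 1 (G c)) with hAdef
    set B : Matrix (V × V × V) (V × V × V) k :=
      ∑ a, ∑ σ, (F a * F σ * Fd δ).trace • (E3 (G a) 1 1 * W2 σ) with hBdef
    have termA : ∀ σ c, lift12 S * (W1 σ * E3 1 1 (G c)) = E3 1 (G σ) (G c) * lift12 S := by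
      intro σ c
      rw [hW1, ← mul_assoc, l12eq2 σ, mul_assoc, lift12_comm, ← mul_assoc, E3_mul, one_mul,
        mul_one, one_mul]
    have stepA : lift12 S * A
        = (∑ σ, ∑ c, (F σ * F c * Fd δ).trace • E3 1 (G σ) (G c)) * lift12 S := by
      rw [hAdef]
      simp only [Finset.mul_sum, Matrix.mul_smul, termA, Finset.sum_mul, Matrix.smul_mul]
    have chainA : lift23 S * (lift12 S * A) = E3 1 1 (G δ) * (lift23 S * lift12 S) := by
      rw [stepA, ← mul_assoc, l23eq2 δ, mul_assoc]
    have termB : ∀ a σ, lift23 S * (E3 (G a) 1 1 * W2 σ) = E3 (G a) 1 (G σ) * lift23 S := by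
      intro a σ
      rw [hW2, ← mul_assoc, lift23_comm, mul_assoc, l23eq2 σ, ← mul_assoc, E3_mul, mul_one,
        one_mul, one_mul]
    have stepB : lift23 S * B
        = (∑ a, ∑ σ, (F a * F σ * Fd δ).trace • E3 (G a) 1 (G σ)) * lift23 S := by
      rw [hBdef]
      simp only [Finset.mul_sum, Matrix.mul_smul, termB, Finset.sum_mul, Matrix.smul_mul]
    have chainB : lift13 S * (lift23 S * B) = E3 1 1 (G δ) * (lift13 S * lift23 S) := by
      rw [stepB, ← mul_assoc, l13eq2 δ, mul_assoc]
    have hABmul : lift23 S * (lift12 S * A) = lift23 S * (lift12 S * B) := by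
      calc lift23 S * (lift12 S * A) = E3 1 1 (G δ) * (lift23 S * lift12 S) := chainA
        _ = E3 1 1 (G δ) * (lift12 S * lift13 S * lift23 S) := by rw [hpent]
        _ = lift12 S * (E3 1 1 (G δ) * (lift13 S * lift23 S)) := by
            rw [mul_assoc (lift12 S) (lift13 S) (lift23 S), ← mul_assoc (E3 1 1 (G δ)),
              ← lift12_comm, mul_assoc]
        _ = lift12 S * (lift13 S * (lift23 S * B)) := by rw [chainB]
        _ = lift12 S * lift13 S * lift23 S * B := by
            rw [← mul_assoc, ← mul_assoc]
        _ = lift23 S * lift12 S * B := by rw [hpent]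
        _ = lift23 S * (lift12 S * B) := by rw [mul_assoc]
    have hAB : A = B := hU12.mul_left_cancel (hU23.mul_left_cancel hABmul)
    have hWE : ∀ σ c, W1 σ * E3 1 1 (G c)
        = ∑ a, ∑ b, (F a * F b * Fd σ).trace • E3 (G a) (G b) (G c) := by
      intro σ c
      rw [hW1]
      simp only [Finset.sum_mul, Matrix.smul_mul, E3_mul, mul_one, one_mul]
    have hWE' : ∀ a σ, E3 (G a) 1 1 * W2 σ
        = ∑ b, ∑ c, (F b * F c * Fd σ).trace • E3 (G a) (G b) (G c) := by
      intro a σ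
      rw [hW2]
      simp only [Finset.mul_sum, Matrix.mul_smul, E3_mul, mul_one, one_mul]
    have traceterm : ∀ a b c,
        (E3 (G a) (G b) (G c) * E3 (Gd α) (Gd β) (Gd γ)).trace
        = (if a = α then (1 : k) else 0) * ((if b = β then (1 : k) else 0) *
            (if c = γ then (1 : k) else 0)) := by
      intro a b c
      rw [E3_mul, trace_E3, hGdual, hGdual, hGdual]
    have pairA : (A * E3 (Gd α) (Gd β) (Gd γ)).trace
        = ∑ σ, (F α * F β * Fd σ).trace * (F σ * F γ * Fd δ).trace := by
      rw [hAdef]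
      simp only [hWE]
      calc ((∑ σ, ∑ c, (F σ * F c * Fd δ).trace •
              (∑ a, ∑ b, (F a * F b * Fd σ).trace • E3 (G a) (G b) (G c)))
            * E3 (Gd α) (Gd β) (Gd γ)).trace
          = ∑ σ, ∑ c, ∑ a, ∑ b, (if b = β then (1:k) else 0) *
              ((if a = α then (1:k) else 0) * ((if c = γ then (1:k) else 0) *
                ((F a * F b * Fd σ).trace * (F σ * F c * Fd δ).trace))) := by
            simp only [Finset.sum_mul, Matrix.smul_mul, Matrix.trace_sum, Matrix.trace_smul,
              smul_eq_mul, traceterm, Finset.mul_sum]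
            refine Finset.sum_congr rfl fun σ _ => Finset.sum_congr rfl fun c _ =>
              Finset.sum_congr rfl fun a _ => Finset.sum_congr rfl fun b _ => by ring
        _ = ∑ σ, (F α * F β * Fd σ).trace * (F σ * F γ * Fd δ).trace := by
            simp only [ite_mul, one_mul, zero_mul, Finset.sum_ite_eq', Finset.mem_univ,
              if_true]
    have pairB : (B * E3 (Gd α) (Gd β) (Gd γ)).trace
        = ∑ σ, (F β * F γ * Fd σ).trace * (F α * F σ * Fd δ).trace := by
      rw [hBdef]
      simp only [hWE']
      calc ((∑ a, ∑ σ, (F a * F σ * Fd δ).trace •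
              (∑ b, ∑ c, (F b * F c * Fd σ).trace • E3 (G a) (G b) (G c)))
            * E3 (Gd α) (Gd β) (Gd γ)).trace
          = ∑ a, ∑ σ, ∑ b, ∑ c, (if c = γ then (1:k) else 0) *
              ((if b = β then (1:k) else 0) * ((if a = α then (1:k) else 0) *
                ((F b * F c * Fd σ).trace * (F a * F σ * Fd δ).trace))) := by
            simp only [Finset.sum_mul, Matrix.smul_mul, Matrix.trace_sum, Matrix.trace_smul,
              smul_eq_mul, traceterm, Finset.mul_sum]
            refine Finset.sum_congr rfl fun a _ => Finset.sum_congr rfl fun σ _ =>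
              Finset.sum_congr rfl fun b _ => Finset.sum_congr rfl fun c _ => by ring
        _ = ∑ σ, ∑ a, ∑ b, ∑ c, (if c = γ then (1:k) else 0) *
              ((if b = β then (1:k) else 0) * ((if a = α then (1:k) else 0) *
                ((F b * F c * Fd σ).trace * (F a * F σ * Fd δ).trace))) :=
            Finset.sum_comm
        _ = ∑ σ, (F β * F γ * Fd σ).trace * (F α * F σ * Fd δ).trace := by
            simp only [ite_mul, one_mul, zero_mul, Finset.sum_ite_eq', Finset.mem_univ,
              if_true]
    rw [← pairA, ← pairB, hAB]
end

section
/- The matrices F^α and G_α extracted from an invertible pentagon solution satisfy the mixed (Heisenberg-double) permutation relation: for all σ, τ ∈ ι, Σ_{α,β,γ} m_{αβ}^τ · μ^{βγ}_σ · F^α · G_γ = G_σ · F^τ, where m_{αβ}^γ := tr(G_α G_β G^γ) and μ^{αβ}_γ := tr(F^α F^β F_γ). -/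
open Matrix BigOperators
open Kronecker

/-!
Write `S = ∑ α, G α ⊗ F α`. Expanding both sides of the pentagon relation gives
`S₁₂ S₁₃ S₂₃ = ∑ α β γ, G α G β ⊗ F α G γ ⊗ F β F γ` and `S₂₃ S₁₂ = ∑ α γ, G α ⊗ G γ F α ⊗ F γ`.
Multiplying by `G^τ ⊗ 1 ⊗ F_σ` on the right and taking the partial trace over the outer two
factors turns the left side into `∑ α β γ, m_{αβ}^τ μ^{βγ}_σ F α G γ` and, by trace duality,
the right side into `G σ F τ`.
-/

namespace Matrix

variable {k V ι : Type*} [CommSemiring k]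

section traceOuter

variable [Fintype V]

def traceOuter : Matrix (V × V × V) (V × V × V) k →ₗ[k] Matrix V V k where
  toFun X := of fun b e => ∑ a, ∑ c, X (a, b, c) (a, e, c)
  map_add' X Y := by ext; simp [Finset.sum_add_distrib]
  map_smul' r X := by ext; simp [Finset.mul_sum]

theorem traceOuter_kronecker (A B C : Matrix V V k) :
    traceOuter (A ⊗ₖ (B ⊗ₖ C)) = (A.trace * C.trace) • B := by
  ext b e
  simp only [traceOuter, LinearMap.coe_mk, AddHom.coe_mk, of_apply, kroneckerMap_apply,
    smul_apply, smul_eq_mul, trace, diag, Finset.sum_mul, Finset.mul_sum,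
    mul_right_comm _ _ (B b e), mul_assoc]
  exact Finset.sum_comm

end traceOuter

section lift

variable [DecidableEq V] [Fintype ι]

theorem lift12_sum_kronecker (A B : ι → Matrix V V k) :
    lift12 (∑ α, A α ⊗ₖ B α) = ∑ α, A α ⊗ₖ (B α ⊗ₖ (1 : Matrix V V k)) := by
  ext ⟨a, b, c⟩ ⟨d, e, f⟩
  simp [lift12, one_apply, sum_apply]

theorem lift13_sum_kronecker (A B : ι → Matrix V V k) :
    lift13 (∑ α, A α ⊗ₖ B α) = ∑ α, A α ⊗ₖ ((1 : Matrix V V k) ⊗ₖ B α) := by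
  ext ⟨a, b, c⟩ ⟨d, e, f⟩
  simp [lift13, one_apply, sum_apply]

theorem lift23_sum_kronecker (A B : ι → Matrix V V k) :
    lift23 (∑ α, A α ⊗ₖ B α) = ∑ α, (1 : Matrix V V k) ⊗ₖ (A α ⊗ₖ B α) := by
  ext ⟨a, b, c⟩ ⟨d, e, f⟩
  simp [lift23, one_apply, sum_apply, mul_comm]

theorem lift12_mul_lift13_mul_lift23_sum_kronecker [Fintype V] (A B : ι → Matrix V V k) :
    lift12 (∑ α, A α ⊗ₖ B α) * lift13 (∑ α, A α ⊗ₖ B α) * lift23 (∑ α, A α ⊗ₖ B α) =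
      ∑ α, ∑ β, ∑ γ, (A α * A β) ⊗ₖ ((B α * A γ) ⊗ₖ (B β * B γ)) := by
  rw [lift12_sum_kronecker, lift13_sum_kronecker, lift23_sum_kronecker, Fintype.sum_mul_sum,
    Finset.sum_mul]
  refine Finset.sum_congr rfl fun α _ => ?_
  rw [Finset.sum_mul]
  refine Finset.sum_congr rfl fun β _ => ?_
  rw [Finset.mul_sum]
  refine Finset.sum_congr rfl fun γ _ => ?_
  simp only [← mul_kronecker_mul, mul_one, one_mul]

theorem lift23_mul_lift12_sum_kronecker [Fintype V] (A B : ι → Matrix V V k) :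
    lift23 (∑ α, A α ⊗ₖ B α) * lift12 (∑ α, A α ⊗ₖ B α) =
      ∑ α, ∑ γ, A α ⊗ₖ ((A γ * B α) ⊗ₖ B γ) := by
  rw [lift12_sum_kronecker, lift23_sum_kronecker, Fintype.sum_mul_sum, Finset.sum_comm]
  simp only [← mul_kronecker_mul, mul_one, one_mul]

end lift

end Matrix

theorem pentagon_mixed_permutation_relation_general
    {k V ι : Type*} [Field k] [Fintype V] [DecidableEq V] [Fintype ι] [DecidableEq ι]
    (S : Matrix (V × V) (V × V) k)
    (hpent : lift12 S * lift13 S * lift23 S = lift23 S * lift12 S)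
    (G F Gd Fd : ι → Matrix V V k)
    (hdecomp : ∀ a b c d, S (a, b) (c, d) = ∑ α, G α a c * F α b d)
    (hFdual : ∀ α β, (Fd α * F β).trace = if α = β then (1 : k) else 0)
    (hGdual : ∀ α β, (G α * Gd β).trace = if α = β then (1 : k) else 0) :
    ∀ σ τ, ∑ α, ∑ β, ∑ γ, ((G α * G β * Gd τ).trace * (F β * F γ * Fd σ).trace) • (F α * G γ) = G σ * F τ := by
  intro σ τ
  have hS : S = ∑ α, G α ⊗ₖ F α := by
    ext ⟨a, b⟩ ⟨c, d⟩
    simp [hdecomp, Matrix.sum_apply]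
  have hFdual' (γ : ι) : (F γ * Fd σ).trace = if σ = γ then 1 else 0 := by
    rw [trace_mul_comm, hFdual]
  have hpent_traced :=
    congrArg (fun X => traceOuter (X * Gd τ ⊗ₖ ((1 : Matrix V V k) ⊗ₖ Fd σ))) hpent
  simp only [hS, lift12_mul_lift13_mul_lift23_sum_kronecker, lift23_mul_lift12_sum_kronecker,
    Finset.sum_mul, ← mul_kronecker_mul, mul_one, map_sum, traceOuter_kronecker] at hpent_traced
  rw [hpent_traced]
  simp [hGdual, hFdual']

theorem pentagon_mixed_permutation_relation
    {k V ι : Type*} [Field k] [Fintype V] [DecidableEq V] [Fintype ι] [DecidableEq ι]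
    (S : Matrix (V × V) (V × V) k)
    (hSinv : IsUnit S)
    (hpent : lift12 S * lift13 S * lift23 S = lift23 S * lift12 S)
    (G F Gd Fd : ι → Matrix V V k)
    (hdecomp : ∀ a b c d, S (a, b) (c, d) = ∑ α, G α a c * F α b d)
    (hFdual : ∀ α β, (Fd α * F β).trace = if α = β then (1 : k) else 0)
    (hGdual : ∀ α β, (G α * Gd β).trace = if α = β then (1 : k) else 0) :
    ∀ σ τ, ∑ α, ∑ β, ∑ γ, ((G α * G β * Gd τ).trace * (F β * F γ * Fd σ).trace) • (F α * G γ) = G σ * F τ :=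
  pentagon_mixed_permutation_relation_general S hpent G F Gd Fd hdecomp hFdual hGdual
end

section
/- The dimension of the reconstructed algebra is given by the rank formula dim(B) = rank((P₁₂S₁₂)^{t₁}). Concretely: the matrix M indexed by (V × V) × (V × V) with entries M_{(a,b),(c,d)} := S_{(b,c),(a,d)} has rank equal to the cardinality of ι. -/
open Matrix BigOperators

theorem pentagon_rank_formula
    {k V ι : Type*} [Field k] [Fintype V] [DecidableEq V] [Fintype ι] [DecidableEq ι]
    (S : Matrix (V × V) (V × V) k)
    (hSinv : IsUnit S)
    (hpent : lift12 S * lift13 S * lift23 S = lift23 S * lift12 S)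
    (G F Gd Fd : ι → Matrix V V k)
    (hdecomp : ∀ a b c d, S (a, b) (c, d) = ∑ α, G α a c * F α b d)
    (hFdual : ∀ α β, (Fd α * F β).trace = if α = β then (1 : k) else 0)
    (hGdual : ∀ α β, (G α * Gd β).trace = if α = β then (1 : k) else 0) :
    (Matrix.of fun (p q : V × V) => S (p.2, q.1) (p.1, q.2)).rank = Fintype.card ι := by
  classical
  set A : Matrix (V × V) ι k := Matrix.of fun p α => G α p.2 p.1 with hA
  set B : Matrix ι (V × V) k := Matrix.of fun α q => F α q.1 q.2 with hB
  set A' : Matrix ι (V × V) k := Matrix.of fun α p => Gd α p.1 p.2 with hA'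
  set B' : Matrix (V × V) ι k := Matrix.of fun q α => Fd α q.2 q.1 with hB'
  have hM : (Matrix.of fun (p q : V × V) => S (p.2, q.1) (p.1, q.2)) = A * B := by
    ext p q
    simp [hA, hB, Matrix.mul_apply, hdecomp]
  have hAA : A' * A = 1 := by
    ext α β
    have := hGdual β α
    rw [Matrix.trace] at this
    simp only [Matrix.diag, Matrix.mul_apply] at this ⊢
    rw [Fintype.sum_prod_type]
    simp only [hA, hA', Matrix.of_apply]
    calc ∑ a : V, ∑ b : V, Gd α a b * G β b a
        = ∑ a : V, ∑ b : V, G β b a * Gd α a b := by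
          simp [mul_comm]
      _ = ∑ b : V, ∑ a : V, G β b a * Gd α a b := Finset.sum_comm ..
      _ = (if β = α then (1:k) else 0) := this
      _ = _ := by simp [Matrix.one_apply, eq_comm]
  have hBB : B * B' = 1 := by
    ext α β
    have h2 := hFdual β α
    rw [Matrix.trace] at h2
    simp only [Matrix.diag, Matrix.mul_apply] at h2 ⊢
    rw [Fintype.sum_prod_type]
    simp only [hB, hB', Matrix.of_apply]
    calc ∑ a : V, ∑ b : V, F α a b * Fd β b a
        = ∑ a : V, ∑ b : V, Fd β b a * F α a b := by
          simp [mul_comm]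
      _ = ∑ b : V, ∑ a : V, Fd β b a * F α a b := Finset.sum_comm ..
      _ = (if β = α then (1:k) else 0) := h2
      _ = _ := by simp [Matrix.one_apply, eq_comm]
  rw [hM]
  refine le_antisymm ?_ ?_
  · calc (A * B).rank ≤ A.rank := Matrix.rank_mul_le_left A B
      _ ≤ Fintype.card ι := Matrix.rank_le_card_width A
  · calc Fintype.card ι = (1 : Matrix ι ι k).rank := (Matrix.rank_one).symm
      _ = (A' * (A * B) * B').rank := by
          rw [show A' * (A * B) * B' = (A' * A) * (B * B') by simp only [Matrix.mul_assoc], hAA, hBB, one_mul]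
      _ ≤ (A * B).rank := le_trans (Matrix.rank_mul_le_left _ _) (Matrix.rank_mul_le_right _ _)
end
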